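/- Let $q^{*k}$ and $q^{*(k+1)}$ be the unique equilibria of the averaged food chain restricted to the first $k$ and $k+1$ species. If $q^{*k}_k \le 0$ then $q^{*(k+1)}_{k+1} < 0$. -/
import Mathlib


open Finset

/-- The Lotka–Volterra food chain per-capita growth rates, indexed by species `i ∈ {1,…,n}`. -/
noncomputable def Fchain (n : ℕ) (a : ℕ → ℕ → ℝ) (x : ℕ → ℝ) (i : ℕ) : ℝ :=
  if i = 1 then a 1 0 - a 1 1 * x 1 - a 1 2 * x 2
  else if i = n then -a n 0 + a n (n-1) * x (n-1) - a n n * x n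
  else -a i 0 + a i (i-1) * x (i-1) - a i i * x i - a i (i+1) * x (i+1)

/-- Sign conditions on the coefficients of the food chain. -/
structure FoodChainCoeffs (n : ℕ) (a : ℕ → ℕ → ℝ) : Prop where
  h10 : 0 < a 1 0
  h11 : 0 < a 1 1
  hdeath : ∀ i, 2 ≤ i → i ≤ n → 0 < a i 0
  hpred : ∀ i, 2 ≤ i → i ≤ n → 0 < a i (i-1)
  hhunt : ∀ i, 1 ≤ i → i < n → 0 < a i (i+1)
  hcomp : ∀ i, 1 ≤ i → i ≤ n → 0 ≤ a i i

/-- Weights `ε_1 = 1`, `ε_i = ∏_{k=2}^i a_{k-1,k}/a_{k,k-1}`. -/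
noncomputable def wt (a : ℕ → ℕ → ℝ) (i : ℕ) : ℝ :=
  ∏ k ∈ Finset.Icc 2 i, a (k-1) k / a k (k-1)

/-- The weighted total population `S(x) = ∑_{i=1}^n ε_i x_i`. -/
noncomputable def Sfun (n : ℕ) (a : ℕ → ℕ → ℝ) (x : ℕ → ℝ) : ℝ :=
  ∑ i ∈ Finset.Icc 1 n, wt a i * x i

/-- The food chain field restricted to `k` species, viewed on `Fin k → ℝ`;
coordinate `i : Fin k` is species `i.val + 1`. -/
noncomputable def Ffin (n : ℕ) (a : ℕ → ℕ → ℝ) (x : Fin n → ℝ) (i : Fin n) : ℝ :=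
  Fchain n a (fun j => if h : 1 ≤ j ∧ j ≤ n then x ⟨j - 1, by omega⟩ else 0) (i.val + 1)

lemma Fchain_one (n : ℕ) (a : ℕ → ℕ → ℝ) (x : ℕ → ℝ) :
    Fchain n a x 1 = a 1 0 - a 1 1 * x 1 - a 1 2 * x 2 := by
  simp [Fchain]

lemma Fchain_last (n : ℕ) (a : ℕ → ℕ → ℝ) (x : ℕ → ℝ) (hn : n ≠ 1) :
    Fchain n a x n = -a n 0 + a n (n-1) * x (n-1) - a n n * x n := by
  unfold Fchain
  rw [if_neg hn, if_pos rfl]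

lemma Fchain_mid (n : ℕ) (a : ℕ → ℕ → ℝ) (x : ℕ → ℝ) (i : ℕ) (h1 : i ≠ 1) (h2 : i ≠ n) :
    Fchain n a x i = -a i 0 + a i (i-1) * x (i-1) - a i i * x i - a i (i+1) * x (i+1) := by
  unfold Fchain
  rw [if_neg h1, if_neg h2]

set_option maxHeartbeats 1000000 in
/-- if `q^{*k}_k ≤ 0` then `q^{*(k+1)}_{k+1} < 0` (extinction cascade). -/
theorem stmt9 (k : ℕ) (hk : 2 ≤ k) (a : ℕ → ℕ → ℝ) (hc : FoodChainCoeffs (k+1) a)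
    (qk : Fin k → ℝ) (hqk : ∀ i, Ffin k a qk i = 0)
    (qk1 : Fin (k+1) → ℝ) (hqk1 : ∀ i, Ffin (k+1) a qk1 i = 0)
    (hle : qk ⟨k - 1, by omega⟩ ≤ 0) :
    qk1 ⟨k, by omega⟩ < 0 := by
  by_contra hcon
  push_neg at hcon
  classical
  set u : ℕ → ℝ := fun j => if h : 1 ≤ j ∧ j ≤ k then qk ⟨j - 1, by omega⟩ else 0 with hudef
  set v : ℕ → ℝ := fun j => if h : 1 ≤ j ∧ j ≤ k + 1 then qk1 ⟨j - 1, by omega⟩ else 0 with hvdef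
  have hU : ∀ i : Fin k, Fchain k a u (i.val + 1) = 0 := fun i => hqk i
  have hV : ∀ i : Fin (k+1), Fchain (k+1) a v (i.val + 1) = 0 := fun i => hqk1 i
  -- boundary coordinate values
  have hukval : u k ≤ 0 := by
    have h : u k = qk ⟨k - 1, by omega⟩ := by
      simp only [hudef]; rw [dif_pos ⟨by omega, le_rfl⟩]
    rw [h]; exact hle
  have hvk1ge : 0 ≤ v (k+1) := by
    have h : v (k+1) = qk1 ⟨k, by omega⟩ := by
      simp only [hvdef]
      rw [dif_pos ⟨by omega, le_rfl⟩]
      exact rfl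
    rw [h]; exact hcon
  clear_value u v
  clear hudef hvdef
  -- extract the equations
  have hu1 : a 1 0 - a 1 1 * u 1 - a 1 2 * u 2 = 0 := by
    have h := hU ⟨0, by omega⟩
    rwa [show (⟨0, by omega⟩ : Fin k).val + 1 = 1 from rfl, Fchain_one] at h
  have hv1 : a 1 0 - a 1 1 * v 1 - a 1 2 * v 2 = 0 := by
    have h := hV ⟨0, by omega⟩
    rwa [show (⟨0, by omega⟩ : Fin (k+1)).val + 1 = 1 from rfl, Fchain_one] at h
  have hui : ∀ i, 2 ≤ i → i ≤ k - 1 →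
      -a i 0 + a i (i-1) * u (i-1) - a i i * u i - a i (i+1) * u (i+1) = 0 := by
    intro i h2 h3
    have h := hU ⟨i - 1, by omega⟩
    rwa [show (⟨i - 1, by omega⟩ : Fin k).val + 1 = i - 1 + 1 from rfl,
      show i - 1 + 1 = i from by omega,
      Fchain_mid k a u i (by omega) (by omega)] at h
  have hvi : ∀ i, 2 ≤ i → i ≤ k →
      -a i 0 + a i (i-1) * v (i-1) - a i i * v i - a i (i+1) * v (i+1) = 0 := by
    intro i h2 h3
    have h := hV ⟨i - 1, by omega⟩
    rwa [show (⟨i - 1, by omega⟩ : Fin (k+1)).val + 1 = i - 1 + 1 from rfl,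
      show i - 1 + 1 = i from by omega,
      Fchain_mid (k+1) a v i (by omega) (by omega)] at h
  have huk : -a k 0 + a k (k-1) * u (k-1) - a k k * u k = 0 := by
    have h := hU ⟨k - 1, by omega⟩
    rwa [show (⟨k - 1, by omega⟩ : Fin k).val + 1 = k - 1 + 1 from rfl,
      show k - 1 + 1 = k from by omega,
      Fchain_last k a u (by omega)] at h
  have hvlast : -a (k+1) 0 + a (k+1) k * v k - a (k+1) (k+1) * v (k+1) = 0 := by
    have h := hV ⟨k, by omega⟩
    rwa [show (⟨k, by omega⟩ : Fin (k+1)).val + 1 = k + 1 from rfl,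
      Fchain_last (k+1) a v (by omega),
      show k + 1 - 1 = k from rfl] at h
  -- coefficient signs
  have h11 : 0 < a 1 1 := hc.h11
  have h12 : 0 < a 1 2 := hc.hhunt 1 le_rfl (by omega)
  have hak1k : 0 < a (k+1) k := by
    have h := hc.hpred (k+1) (by omega) le_rfl
    rwa [show k + 1 - 1 = k from rfl] at h
  have hak10 : 0 < a (k+1) 0 := hc.hdeath (k+1) (by omega) le_rfl
  have hak1c : 0 ≤ a (k+1) (k+1) := hc.hcomp (k+1) (by omega) le_rfl
  have hakk1 : 0 < a k (k+1) := hc.hhunt k (by omega) (by omega)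
  have hakk : 0 ≤ a k k := hc.hcomp k (by omega) (by omega)
  have hakm : 0 < a k (k-1) := hc.hpred k hk (by omega)
  -- the difference sequence
  set d : ℕ → ℝ := fun j => v j - u j with hddef
  have hd : ∀ j, d j = v j - u j := fun j => rfl
  clear_value d
  clear hddef
  -- v k is positive
  have hvkpos : 0 < v k := by
    by_contra hvk
    push_neg at hvk
    have h1 : a (k+1) k * v k ≤ 0 := mul_nonpos_of_nonneg_of_nonpos hak1k.le hvk
    nlinarith [mul_nonneg hak1c hvk1ge]
  have hdk : 0 < d k := by rw [hd]; linarith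
  -- alternation of signs along the chain
  have hC : ∀ i, 1 ≤ i → i ≤ k - 1 →
      (d i * d (i+1) < 0 ∨ (d i = 0 ∧ d (i+1) = 0)) := by
    intro i hi1
    induction i, hi1 using Nat.le_induction with
    | base =>
      intro _
      have hrel : a 1 1 * d 1 + a 1 2 * d 2 = 0 := by
        rw [hd, hd]; linarith
      by_cases h0 : d 1 = 0
      · right
        refine ⟨h0, ?_⟩
        have h3 : a 1 2 * d 2 = 0 := by rw [h0] at hrel; linarith
        rcases mul_eq_zero.mp h3 with h | h
        · exact absurd h (ne_of_gt h12)
        · exact h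
      · left
        have h2 := congrArg (fun t => d 1 * t) hrel
        simp only [mul_zero] at h2
        nlinarith [mul_self_pos.mpr h0, h2]
    | succ i hi ih =>
      intro hle2
      have hii : i ≤ k - 1 := by omega
      have hCi := ih hii
      have hp : 0 < a (i+1) i := by
        have h := hc.hpred (i+1) (by omega) (by omega)
        rwa [show i + 1 - 1 = i from rfl] at h
      have hq : 0 ≤ a (i+1) (i+1) := hc.hcomp (i+1) (by omega) (by omega)
      have hr : 0 < a (i+1) (i+2) := hc.hhunt (i+1) (by omega) (by omega)
      have hueq := hui (i+1) (by omega) (by omega)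
      have hveq := hvi (i+1) (by omega) (by omega)
      rw [show i + 1 - 1 = i from rfl] at hueq hveq
      have hrel : a (i+1) i * d i - a (i+1) (i+1) * d (i+1) - a (i+1) (i+2) * d (i+2) = 0 := by
        rw [hd, hd, hd]; linarith
      rcases hCi with hlt | ⟨hz1, hz2⟩
      · left
        have h2 := congrArg (fun t => d (i+1) * t) hrel
        simp only [mul_zero] at h2
        nlinarith [sq_nonneg (d (i+1)), h2, hlt]
      · right
        refine ⟨hz2, ?_⟩
        rw [hz1, hz2] at hrel
        have h3 : a (i+1) (i+2) * d (i+2) = 0 := by linarith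
        rcases mul_eq_zero.mp h3 with h | h
        · exact absurd h (ne_of_gt hr)
        · exact h
  -- conclude d (k-1) < 0
  have hdkm : d (k-1) < 0 := by
    have h := hC (k-1) (by omega) le_rfl
    rw [show k - 1 + 1 = k from by omega] at h
    rcases h with h | ⟨_, h⟩
    · nlinarith
    · rw [h] at hdk; exact absurd hdk (lt_irrefl 0)
  -- the k-th equations give the contradiction
  have hvk : -a k 0 + a k (k-1) * v (k-1) - a k k * v k - a k (k+1) * v (k+1) = 0 :=
    hvi k hk le_rfl
  have hkey : a k (k+1) * v (k+1) = a k (k-1) * d (k-1) - a k k * d k := by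
    rw [hd, hd]; linarith
  nlinarith [mul_pos hakm (neg_pos.mpr hdkm), mul_nonneg hakk hdk.le,
    mul_nonneg hakk1.le hvk1ge]
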